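/- arXiv:2110.10794 — 2 statements merged into one kernel-verified Lean document; each statement's English description precedes it below -/
import Mathlib

section
/- In the merged Tanner graph construction for measuring an X-type logical operator X̃ with r dual layers, the product of all X-type stabilizer generators in the ancilla system equals X̃. Concretely: in the merged code, each ancilla qubit of type c^T[k] (dual-layer qubit) is touched by an even number of the X generators, each ancilla qubit of type v[k] for k≥2 (primal-layer qubit) is touched by exactly two of the X generators, and each original qubit v[1] in supp(X̃) is touched by exactly one, so the total product acts as X exactly on supp(X̃). -/
open Finset

section

variable {V C : Type}

/-- Dual-layer ancilla qubits for one layer: one qubit `c^T` for each Z-check `c`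
adjacent to the support `L` of the measured logical operator. -/
abbrev DualQubit (Adj : C → V → Bool) (L : Finset V) : Type :=
  {c : C // (L.filter fun v => Adj c v).Nonempty}

/-- Index of the X-type stabilizer generators `v^T[j]` of the ancilla system:
one for each qubit `v ∈ supp(X̃)` and each of the `r` dual layers `j`
(layers are 0-indexed here, with `j = 0` the layer attached to the code). -/
abbrev AncXGen (L : Finset V) (r : ℕ) : Type := ↥L × Fin r

/-- The generator `v^T[j]` acts on the original qubit `w` iff `j` is the first layer and
`w = v`. -/
abbrev actsOrig [DecidableEq V] {L : Finset V} {r : ℕ}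
    (g : AncXGen L r) (w : V) : Prop :=
  g.2.val = 0 ∧ (g.1 : V) = w

/-- The generator `v^T[j]` acts on the dual-layer qubit `c^T[k]` iff `k = j` and the
Z-check `c` is adjacent to `v` in the Tanner graph. -/
abbrev actsDual {Adj : C → V → Bool} {L : Finset V} {r : ℕ}
    (g : AncXGen L r) (p : DualQubit Adj L × Fin r) : Prop :=
  g.2 = p.2 ∧ Adj p.1.val (g.1 : V)

/-- The generator `v^T[j]` acts on the primal-layer qubit `v'[m]` (for `m` indexing the
`r-1` primal layers between consecutive dual layers) iff `v' = v` and `j = m` or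
`j = m + 1`. -/
abbrev actsPrimal {L : Finset V} {r : ℕ}
    (g : AncXGen L r) (p : ↥L × Fin (r - 1)) : Prop :=
  g.1 = p.1 ∧ (g.2.val = p.2.val ∨ g.2.val = p.2.val + 1)

lemma card_filter_prod {α β : Type} [Fintype α] [Fintype β]
    (P : α → Prop) (Q : β → Prop) [DecidablePred P] [DecidablePred Q] :
    (univ.filter fun g : α × β => P g.1 ∧ Q g.2).card
      = (univ.filter P).card * (univ.filter Q).card := by
  rw [← Finset.univ_product_univ, Finset.filter_product, Finset.card_product]

lemma card_filter_subtype {V : Type} [DecidableEq V] (L : Finset V)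
    (p : V → Prop) [DecidablePred p] :
    ((univ : Finset ↥L).filter fun v : ↥L => p (v : V)).card = (L.filter p).card := by
  rw [Finset.univ_eq_attach, Finset.filter_attach, Finset.card_map, Finset.card_attach]

/-- In the merged Tanner graph construction for measuring an X-type logical
operator `X̃` with support `L` and `r` dual layers, assuming (as forced by commutation of
`X̃` with the Z-checks) that every Z-check meets `L` evenly: every dual-layer ancilla
qubit is touched by an even number of the ancilla X generators, every primal-layer qubit
by exactly two, and every original qubit of `supp(X̃)` by exactly one; consequently the
product of all ancilla X generators acts as `X` exactly on `supp(X̃)`, i.e. it equals `X̃`. -/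
theorem product_of_ancilla_X_generators_is_logical
    [Fintype V] [Fintype C] [DecidableEq V] [DecidableEq C]
    (Adj : C → V → Bool) (L : Finset V) (r : ℕ) (hr : 1 ≤ r)
    (heven : ∀ c : C, Even ((L.filter fun v => Adj c v).card)) :
    (∀ p : DualQubit Adj L × Fin r,
        Even ((univ.filter fun g : AncXGen L r => actsDual g p).card)) ∧
    (∀ p : ↥L × Fin (r - 1),
        (univ.filter fun g : AncXGen L r => actsPrimal g p).card = 2) ∧
    (∀ v : V, v ∈ L →
        (univ.filter fun g : AncXGen L r => actsOrig g v).card = 1) ∧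
    (∀ w : V,
        (Odd ((univ.filter fun g : AncXGen L r => actsOrig g w).card) ↔ w ∈ L)) := by
  have horig : ∀ w : V, (univ.filter fun g : AncXGen L r => actsOrig g w).card
      = (L.filter fun v => v = w).card := by
    intro w
    have h1 : (univ.filter fun g : AncXGen L r => actsOrig g w)
        = univ.filter fun g : AncXGen L r => ((g.1 : V) = w) ∧ (g.2.val = 0) := by
      apply Finset.filter_congr; intro g _; simp [actsOrig, and_comm]
    rw [h1, card_filter_prod (fun v : ↥L => (v : V) = w) (fun j : Fin r => j.val = 0),
      card_filter_subtype L (fun v => v = w)]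
    have h2 : (univ.filter fun j : Fin r => j.val = 0) = {⟨0, hr⟩} := by
      ext j; simp [Fin.ext_iff]
    rw [h2, Finset.card_singleton, mul_one]
  refine ⟨?_, ?_, ?_, ?_⟩
  · rintro ⟨c, k⟩
    have h1 : (univ.filter fun g : AncXGen L r => actsDual g (c, k))
        = univ.filter fun g : AncXGen L r => (Adj c.val (g.1 : V)) ∧ (g.2 = k) := by
      apply Finset.filter_congr; intro g _; simp [actsDual, and_comm]
    rw [h1, card_filter_prod (fun v : ↥L => Adj c.val (v : V)) (fun j : Fin r => j = k),
      card_filter_subtype L (fun v => Adj c.val v), Finset.filter_eq', if_pos (Finset.mem_univ k),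
      Finset.card_singleton, mul_one]
    exact heven c.val
  · rintro ⟨v, m⟩
    have hm : (m : ℕ) + 1 < r := by omega
    have h1 : (univ.filter fun g : AncXGen L r => actsPrimal g (v, m))
        = univ.filter fun g : AncXGen L r =>
            (g.1 = v) ∧ (g.2.val = (m : ℕ) ∨ g.2.val = (m : ℕ) + 1) := by
      apply Finset.filter_congr; intro g _; simp [actsPrimal]
    rw [h1, card_filter_prod (fun v' : ↥L => v' = v)
      (fun j : Fin r => j.val = (m : ℕ) ∨ j.val = (m : ℕ) + 1),
      Finset.filter_eq', if_pos (Finset.mem_univ v), Finset.card_singleton, one_mul]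
    have h2 : (univ.filter fun j : Fin r => j.val = (m : ℕ) ∨ j.val = (m : ℕ) + 1)
        = {⟨m, by omega⟩, ⟨(m : ℕ) + 1, hm⟩} := by
      ext j; simp [Fin.ext_iff]
    rw [h2, Finset.card_insert_of_notMem (by simp [Fin.ext_iff]), Finset.card_singleton]
  · intro v hv
    rw [horig v]
    rw [Finset.filter_eq', if_pos hv, Finset.card_singleton]
  · intro w
    rw [horig w]
    by_cases hw : w ∈ L
    · simp [Finset.filter_eq', hw]
    · have : (L.filter fun v => v = w) = ∅ := by
        rw [Finset.filter_eq', if_neg hw]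
      simp [this, hw, Nat.odd_iff]

end
end

section
/- With the layered ancilla construction for measuring a logical operator on a quantum LDPC code where every stabilizer generator has weight at most w and every qubit is in the support of at most q stabilizer generators, the merged code has all stabilizer generators of weight at most max(w+3, q+3) and every qubit in the support of at most max(w+3, q+3) generators. -/
open Finset

section

variable {V CX CZ : Type}

/-- Dual-layer ancilla qubits (one per layer): a qubit `c^T` for each Z-check `c`
adjacent to the support `L` of the measured logical operator. -/
abbrev DualIdx (AdjZ : CZ → V → Bool) (L : Finset V) : Type :=
  {c : CZ // (L.filter fun v => AdjZ c v).Nonempty}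

/-- Qubits of the merged code: the original qubits, the dual-layer ancilla qubits
(`r` dual layers), and the primal-layer ancilla qubits (`r - 1` primal layers, one
qubit per element of `L` per layer). -/
abbrev MergedQubit (AdjZ : CZ → V → Bool) (L : Finset V) (r : ℕ) : Type :=
  V ⊕ (DualIdx AdjZ L × Fin r) ⊕ (↥L × Fin (r - 1))

/-- X-type stabilizer generators of the merged code: the original X-checks together with
the ancilla generators `v^T[j]`, `v ∈ L`, `j` a dual layer. -/
abbrev MXGen (CX : Type) {V : Type} (L : Finset V) (r : ℕ) : Type := CX ⊕ (↥L × Fin r)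

/-- Z-type stabilizer generators of the merged code: the (deformed) original Z-checks
together with the primal-layer copies `c[j]` of the Z-checks adjacent to `L`. -/
abbrev MZGen (AdjZ : CZ → V → Bool) (L : Finset V) (r : ℕ) : Type :=
  CZ ⊕ (DualIdx AdjZ L × Fin (r - 1))

/-- Incidence of the X-type generators of the merged code with its qubits. -/
def mergedMX [DecidableEq V] (AdjX : CX → V → Bool) (AdjZ : CZ → V → Bool)
    (L : Finset V) (r : ℕ) :
    MXGen CX L r → MergedQubit AdjZ L r → Bool
  | Sum.inl c, Sum.inl v0 => AdjX c v0
  | Sum.inl _, Sum.inr _ => false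
  | Sum.inr (v, j), Sum.inl v0 => decide ((v : V) = v0) && decide (j.val = 0)
  | Sum.inr (v, j), Sum.inr (Sum.inl (c, k)) => decide (j = k) && AdjZ c.val (v : V)
  | Sum.inr (v, j), Sum.inr (Sum.inr (v', m)) =>
      decide (v' = v) && (decide (j.val = m.val) || decide (j.val = m.val + 1))

/-- Incidence of the Z-type generators of the merged code with its qubits: each original
Z-check adjacent to `L` is deformed by one extra (first dual layer) ancilla qubit, and the
primal-layer Z-checks act on their layer's primal qubits and the two neighbouring
dual-layer qubits. -/
def mergedMZ [DecidableEq V] [DecidableEq CZ] (AdjZ : CZ → V → Bool)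
    (L : Finset V) (r : ℕ) :
    MZGen AdjZ L r → MergedQubit AdjZ L r → Bool
  | Sum.inl c, Sum.inl v0 => AdjZ c v0
  | Sum.inl c, Sum.inr (Sum.inl (c', k)) => decide (c'.val = c) && decide (k.val = 0)
  | Sum.inl _, Sum.inr (Sum.inr _) => false
  | Sum.inr _, Sum.inl _ => false
  | Sum.inr (c, m), Sum.inr (Sum.inl (c', k)) =>
      decide (c' = c) && (decide (k.val = m.val) || decide (k.val = m.val + 1))
  | Sum.inr (c, m), Sum.inr (Sum.inr (v, m')) => decide (m' = m) && AdjZ c.val (v : V)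

/-!
Split the support of a generator, and the set of generators acting on a qubit, according to
the kinds of qubits and generators. Each block is then empty, a single element, two elements
in adjacent layers `m` and `m + 1` of one ancilla, or, after forgetting the layer index, a
subset of a row or column of the original incidence. In every case the blocks of the last sort
fit together into one row (at most `w` elements) or one column (at most `q` elements), and the
other blocks contribute at most `3`.
-/

section Counting

variable {α β γ : Type*}

theorem card_filter_sum_type [Fintype α] [Fintype β] (p : α ⊕ β → Prop) [DecidablePred p] :
    #{x | p x} = #{a | p (.inl a)} + #{b | p (.inr b)} := by
  simp only [card_filter, Fintype.sum_sum_type]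

theorem card_filter_le_of_injOn [Fintype α] (p : α → Prop) [DecidablePred p] (t : Finset β)
    (f : α → β) (hmaps : ∀ a, p a → f a ∈ t) (hinj : Set.InjOn f {a | p a}) :
    #{a | p a} ≤ #t :=
  card_le_card_of_injOn f (by simpa [Set.MapsTo] using hmaps) (by simpa using hinj)

theorem card_filter_le_one_of_injective [Fintype α] (p : α → Prop) [DecidablePred p]
    (f : α → β) (hf : Function.Injective f) (b : β) (h : ∀ a, p a → f a = b) :
    #{a | p a} ≤ 1 :=
  card_singleton b ▸ card_filter_le_of_injOn p {b} f (fun a ha => mem_singleton.2 (h a ha))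
    hf.injOn

theorem card_filter_prod_le_of_snd_eq [Fintype α] [Fintype β] (p : α × β → Prop)
    [DecidablePred p] (b₀ : β) (t : Finset γ) (f : α → γ) (hf : Function.Injective f)
    (h : ∀ a b, p (a, b) → b = b₀ ∧ f a ∈ t) : #{x | p x} ≤ #t := by
  refine card_filter_le_of_injOn p t (fun x => f x.1) (fun x hx => (h _ _ hx).2) ?_
  rintro ⟨a, b⟩ hab ⟨a', b'⟩ hab' hf'
  exact Prod.ext (hf hf') ((h a b hab).1.trans (h a' b' hab').1.symm)

theorem card_filter_prod_le_of_fst_eq [Fintype α] [Fintype β] (p : α × β → Prop)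
    [DecidablePred p] (a₀ : α) (t : Finset γ) (f : β → γ) (hf : Function.Injective f)
    (h : ∀ a b, p (a, b) → a = a₀ ∧ f b ∈ t) : #{x | p x} ≤ #t := by
  refine card_filter_le_of_injOn p t (fun x => f x.2) (fun x hx => (h _ _ hx).2) ?_
  rintro ⟨a, b⟩ hab ⟨a', b'⟩ hab' hf'
  exact Prod.ext ((h a b hab).1.trans (h a' b' hab').1.symm) (hf hf')

end Counting

section MergedCode

variable [DecidableEq V] (AdjX : CX → V → Bool) (AdjZ : CZ → V → Bool) (L : Finset V) (r : ℕ)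

theorem card_support_mergedMX_inl [Fintype V] [Fintype CZ] (c : CX) :
    #{qb | mergedMX AdjX AdjZ L r (.inl c) qb} = #{v | AdjX c v} := by
  have hDual : #{x : DualIdx AdjZ L × Fin r | mergedMX AdjX AdjZ L r (.inl c) (.inr (.inl x))}
      = 0 := by simp [mergedMX]
  have hPrimal : #{x : L × Fin (r - 1) | mergedMX AdjX AdjZ L r (.inl c) (.inr (.inr x))}
      = 0 := by simp [mergedMX]
  rw [card_filter_sum_type, card_filter_sum_type, hDual, hPrimal]
  rfl

theorem card_support_mergedMX_inr_le [Fintype V] [Fintype CZ] (v : L) (j : Fin r) :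
    #{qb | mergedMX AdjX AdjZ L r (.inr (v, j)) qb} ≤ #{c | AdjZ c v} + 3 := by
  have hOrig : #{v₀ | mergedMX AdjX AdjZ L r (.inr (v, j)) (.inl v₀)} ≤ 1 :=
    card_filter_le_one_of_injective _ id Function.injective_id v fun v₀ h => by
      simp_all [mergedMX]
  have hDual : #{x : DualIdx AdjZ L × Fin r |
      mergedMX AdjX AdjZ L r (.inr (v, j)) (.inr (.inl x))} ≤ #{c | AdjZ c v} :=
    card_filter_prod_le_of_snd_eq _ j _ Subtype.val Subtype.val_injective fun c k h => by
      simp only [mergedMX, Bool.and_eq_true, decide_eq_true_eq, mem_filter, mem_univ,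
        true_and] at h ⊢
      exact ⟨h.1.symm, h.2⟩
  have hPrimal : #{x : L × Fin (r - 1) |
      mergedMX AdjX AdjZ L r (.inr (v, j)) (.inr (.inr x))} ≤ #({j.val, j.val - 1} : Finset ℕ) :=
    card_filter_prod_le_of_fst_eq _ v _ Fin.val Fin.val_injective fun v' m h => by
      simp only [mergedMX, Bool.and_eq_true, decide_eq_true_eq, Bool.or_eq_true, mem_insert,
        mem_singleton] at h ⊢
      exact ⟨h.1, by omega⟩
  have := card_le_two (a := j.val) (b := j.val - 1)
  rw [card_filter_sum_type, card_filter_sum_type]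
  omega

theorem card_support_mergedMZ_inl_le [Fintype V] [Fintype CZ] [DecidableEq CZ] (c : CZ) :
    #{qb | mergedMZ AdjZ L r (.inl c) qb} ≤ #{v | AdjZ c v} + 1 := by
  have hOrig : #{v₀ | mergedMZ AdjZ L r (.inl c) (.inl v₀)} = #{v | AdjZ c v} := rfl
  have hDual : #{x : DualIdx AdjZ L × Fin r | mergedMZ AdjZ L r (.inl c) (.inr (.inl x))} ≤ 1 :=
    card_filter_le_one_of_injective _ (fun x => (x.1.val, x.2.val))
      (Subtype.val_injective.prodMap Fin.val_injective) (c, 0) fun ⟨c', k⟩ h => by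
        simpa [mergedMZ] using h
  have hPrimal : #{x : L × Fin (r - 1) | mergedMZ AdjZ L r (.inl c) (.inr (.inr x))} = 0 := by
    simp [mergedMZ]
  rw [card_filter_sum_type, card_filter_sum_type]
  omega

theorem card_support_mergedMZ_inr_le [Fintype V] [Fintype CZ] [DecidableEq CZ]
    (c : DualIdx AdjZ L) (m : Fin (r - 1)) :
    #{qb | mergedMZ AdjZ L r (.inr (c, m)) qb} ≤ #{v | AdjZ c v} + 2 := by
  have hOrig : #{v₀ | mergedMZ AdjZ L r (.inr (c, m)) (.inl v₀)} = 0 := by simp [mergedMZ]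
  have hDual : #{x : DualIdx AdjZ L × Fin r | mergedMZ AdjZ L r (.inr (c, m)) (.inr (.inl x))}
      ≤ #({m.val, m.val + 1} : Finset ℕ) :=
    card_filter_prod_le_of_fst_eq _ c _ Fin.val Fin.val_injective fun c' k h => by
      simp only [mergedMZ, Bool.and_eq_true, decide_eq_true_eq, Bool.or_eq_true, mem_insert,
        mem_singleton] at h ⊢
      exact ⟨h.1, by omega⟩
  have hPrimal : #{x : L × Fin (r - 1) | mergedMZ AdjZ L r (.inr (c, m)) (.inr (.inr x))}
      ≤ #{v | AdjZ c v} :=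
    card_filter_prod_le_of_snd_eq _ m _ Subtype.val Subtype.val_injective fun v m' h => by
      simpa [mergedMZ] using h
  have := card_le_two (a := m.val) (b := m.val + 1)
  rw [card_filter_sum_type, card_filter_sum_type]
  omega

theorem card_checks_mergedQubit_inl_le [Fintype CX] [Fintype CZ] [DecidableEq CZ] (v : V) :
    #{g | mergedMX AdjX AdjZ L r g (.inl v)} + #{g | mergedMZ AdjZ L r g (.inl v)}
      ≤ #{c | AdjX c v} + #{c | AdjZ c v} + 1 := by
  have hXOrig : #{c | mergedMX AdjX AdjZ L r (.inl c) (.inl v)} = #{c | AdjX c v} := rfl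
  have hXAnc : #{x : L × Fin r | mergedMX AdjX AdjZ L r (.inr x) (.inl v)} ≤ 1 :=
    card_filter_le_one_of_injective _ (fun x => (x.1.val, x.2.val))
      (Subtype.val_injective.prodMap Fin.val_injective) (v, 0) fun ⟨v', j⟩ h => by
        simpa [mergedMX] using h
  have hZOrig : #{c | mergedMZ AdjZ L r (.inl c) (.inl v)} = #{c | AdjZ c v} := rfl
  have hZAnc : #{x : DualIdx AdjZ L × Fin (r - 1) | mergedMZ AdjZ L r (.inr x) (.inl v)} = 0 := by
    simp [mergedMZ]
  rw [card_filter_sum_type, card_filter_sum_type]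
  omega

theorem card_checks_mergedQubit_dual_le [Fintype V] [Fintype CX] [Fintype CZ] [DecidableEq CZ]
    (c : DualIdx AdjZ L) (k : Fin r) :
    #{g | mergedMX AdjX AdjZ L r g (.inr (.inl (c, k)))}
      + #{g | mergedMZ AdjZ L r g (.inr (.inl (c, k)))} ≤ #{v | AdjZ c v} + 3 := by
  have hXOrig : #{c₀ | mergedMX AdjX AdjZ L r (.inl c₀) (.inr (.inl (c, k)))} = 0 := by
    simp [mergedMX]
  have hXAnc : #{x : L × Fin r | mergedMX AdjX AdjZ L r (.inr x) (.inr (.inl (c, k)))}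
      ≤ #{v | AdjZ c v} :=
    card_filter_prod_le_of_snd_eq _ k _ Subtype.val Subtype.val_injective fun v j h => by
      simpa [mergedMX] using h
  have hZOrig : #{c₀ | mergedMZ AdjZ L r (.inl c₀) (.inr (.inl (c, k)))} ≤ 1 :=
    card_filter_le_one_of_injective _ id Function.injective_id c.val fun c₀ h => by
      simp only [mergedMZ, Bool.and_eq_true, decide_eq_true_eq] at h
      exact h.1.symm
  have hZAnc : #{x : DualIdx AdjZ L × Fin (r - 1) |
      mergedMZ AdjZ L r (.inr x) (.inr (.inl (c, k)))} ≤ #({k.val, k.val - 1} : Finset ℕ) :=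
    card_filter_prod_le_of_fst_eq _ c _ Fin.val Fin.val_injective fun c' m h => by
      simp only [mergedMZ, Bool.and_eq_true, decide_eq_true_eq, Bool.or_eq_true, mem_insert,
        mem_singleton] at h ⊢
      exact ⟨h.1.symm, by omega⟩
  have := card_le_two (a := k.val) (b := k.val - 1)
  rw [card_filter_sum_type, card_filter_sum_type]
  omega

theorem card_checks_mergedQubit_primal_le [Fintype CX] [Fintype CZ] [DecidableEq CZ]
    (v : L) (m : Fin (r - 1)) :
    #{g | mergedMX AdjX AdjZ L r g (.inr (.inr (v, m)))}
      + #{g | mergedMZ AdjZ L r g (.inr (.inr (v, m)))} ≤ #{c | AdjZ c v} + 2 := by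
  have hXOrig : #{c | mergedMX AdjX AdjZ L r (.inl c) (.inr (.inr (v, m)))} = 0 := by
    simp [mergedMX]
  have hXAnc : #{x : L × Fin r | mergedMX AdjX AdjZ L r (.inr x) (.inr (.inr (v, m)))}
      ≤ #({m.val, m.val + 1} : Finset ℕ) :=
    card_filter_prod_le_of_fst_eq _ v _ Fin.val Fin.val_injective fun v' j h => by
      simp only [mergedMX, Bool.and_eq_true, decide_eq_true_eq, Bool.or_eq_true, mem_insert,
        mem_singleton] at h ⊢
      exact ⟨h.1.symm, by omega⟩
  have hZOrig : #{c | mergedMZ AdjZ L r (.inl c) (.inr (.inr (v, m)))} = 0 := by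
    simp [mergedMZ]
  have hZAnc : #{x : DualIdx AdjZ L × Fin (r - 1) |
      mergedMZ AdjZ L r (.inr x) (.inr (.inr (v, m)))} ≤ #{c | AdjZ c v} :=
    card_filter_prod_le_of_snd_eq _ m _ Subtype.val Subtype.val_injective fun c m' h => by
      simp only [mergedMZ, Bool.and_eq_true, decide_eq_true_eq, mem_filter, mem_univ,
        true_and] at h ⊢
      exact ⟨h.1.symm, h.2⟩
  have := card_le_two (a := m.val) (b := m.val + 1)
  rw [card_filter_sum_type, card_filter_sum_type]
  omega

end MergedCode

/-- if the original LDPC code has all stabilizer generators of weight at most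
`w` and every qubit in the support of at most `q` generators, then the merged code obtained
from the layered ancilla construction has all stabilizer generators of weight at most
`max (w+3) (q+3)` and every qubit in the support of at most `max (w+3) (q+3)` generators. -/
theorem merged_code_is_LDPC
    [Fintype V] [Fintype CX] [Fintype CZ] [DecidableEq V] [DecidableEq CZ]
    (AdjX : CX → V → Bool) (AdjZ : CZ → V → Bool)
    (L : Finset V) (r w q : ℕ)
    (hwX : ∀ c : CX, (univ.filter fun v => AdjX c v).card ≤ w)
    (hwZ : ∀ c : CZ, (univ.filter fun v => AdjZ c v).card ≤ w)
    (hq : ∀ v : V, (univ.filter fun c : CX => AdjX c v).card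
        + (univ.filter fun c : CZ => AdjZ c v).card ≤ q) :
    (∀ g : MXGen CX L r,
        (univ.filter fun qb => mergedMX AdjX AdjZ L r g qb).card ≤ max (w + 3) (q + 3)) ∧
    (∀ g : MZGen AdjZ L r,
        (univ.filter fun qb => mergedMZ AdjZ L r g qb).card ≤ max (w + 3) (q + 3)) ∧
    (∀ qb : MergedQubit AdjZ L r,
        (univ.filter fun g : MXGen CX L r => mergedMX AdjX AdjZ L r g qb).card
          + (univ.filter fun g : MZGen AdjZ L r => mergedMZ AdjZ L r g qb).card
          ≤ max (w + 3) (q + 3)) := by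
  have hw_le_max : w + 3 ≤ max (w + 3) (q + 3) := le_max_left _ _
  have hq_le_max : q + 3 ≤ max (w + 3) (q + 3) := le_max_right _ _
  refine ⟨?_, ?_, ?_⟩
  · rintro (c | ⟨v, j⟩)
    · linarith [card_support_mergedMX_inl AdjX AdjZ L r c, hwX c]
    · linarith [card_support_mergedMX_inr_le AdjX AdjZ L r v j, hq v]
  · rintro (c | ⟨c, m⟩)
    · linarith [card_support_mergedMZ_inl_le AdjZ L r c, hwZ c]
    · linarith [card_support_mergedMZ_inr_le AdjZ L r c m, hwZ c]
  · rintro (v | ⟨c, k⟩ | ⟨v, m⟩)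
    · linarith [card_checks_mergedQubit_inl_le AdjX AdjZ L r v, hq v]
    · linarith [card_checks_mergedQubit_dual_le AdjX AdjZ L r c k, hwZ c]
    · linarith [card_checks_mergedQubit_primal_le AdjX AdjZ L r v m, hq v]

end
end
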